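/- For all n > m ≥ 0 and 0 ≤ t ≤ m+1, the quantities r^t_{n,m} := |{ x ∈ A_n \ A_{n-1} : x ⊆ A_m and rk(x) ≤ t }| satisfy r^t_{n,m} = r^t_{n,m-1} + Σ_{k=1}^{n-m-1} r^t_{n-k,m-1} · C(r^{t-1}_{m,m-1}, k) + C(r^{t-1}_{m,m-1}, n−m) · Σ_{k=0}^{m} r^t_{k,k-1}, with r^t_{0,-1} = 1 and r^t_{n,-1} = 0 for n ≥ 1. -/

import Mathlib

open ZFSet Finset

noncomputable section

abbrev HFSet := ZFSet.{0}

/-- The adjunctive hierarchy of hereditarily finite sets. -/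
def A : ℕ → Set HFSet
  | 0 => {∅}
  | n + 1 => {∅} ∪ {z | ∃ x ∈ A n, ∃ y ∈ A n, z = insert y x}

/-- Integer-indexed version, with `A n = ∅` for `n < 0`. -/
def Az (n : ℤ) : Set HFSet := if 0 ≤ n then A n.toNat else ∅

/-- The cumulative hierarchy (von Neumann) of hereditarily finite sets. -/
def W : ℕ → HFSet
  | 0 => ∅
  | n + 1 => ZFSet.powerset (W n)

/-- A ZF set is hereditarily finite if it lies in some finite level of the
cumulative hierarchy. -/
def IsHF (x : HFSet) : Prop := ∃ n, x ∈ W n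

/-- The adjunctive rank. -/
def ark (x : HFSet) : ℕ := sInf {n | x ∈ A n}

/-- The (von Neumann) rank of a hereditarily finite set. -/
def rk (x : HFSet) : ℕ := sInf {n | x ∈ W (n + 1)}

/-- `B n m` = sets in `A n \ A (n-1)` all of whose elements lie in `A m`. -/
def B (n m : ℤ) : Set HFSet :=
  {x | x ∈ Az n ∧ x ∉ Az (n - 1) ∧ ∀ y, y ∈ x → y ∈ Az m}

def b (n m : ℤ) : ℕ := (B n m).ncard

def a (n : ℕ) : ℕ := (A n).ncard

def c (n : ℕ) : ℕ := (Az n \ Az ((n : ℤ) - 1)).ncard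

/-- `r t n m` counts sets in `A n \ A (n-1)` included in `A m` of rank at most `t`. -/
noncomputable def r (t n m : ℤ) : ℕ :=
  {x : HFSet | x ∈ Az n ∧ x ∉ Az (n - 1) ∧ (∀ y, y ∈ x → y ∈ Az m) ∧
    (rk x : ℤ) ≤ t}.ncard

@[simp] theorem ZFSet.mem_toSet (a u : ZFSet.{0}) : a ∈ u.toSet ↔ a ∈ u := Iff.rfl

@[simp] theorem ZFSet.toSet_empty : ZFSet.toSet (∅ : ZFSet.{0}) = ∅ := by
  ext z; simp [ZFSet.notMem_empty]

@[simp] theorem ZFSet.toSet_insert (x y : ZFSet.{0}) :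
    (insert x y).toSet = insert x y.toSet := by
  ext z; simp [ZFSet.mem_insert_iff]

-- basic lemmas
lemma mem_A_succ_iff {n : ℕ} {z : HFSet} :
    z ∈ A (n+1) ↔ z = ∅ ∨ ∃ x ∈ A n, ∃ y ∈ A n, z = insert y x := by
  simp [A, Set.mem_union]

lemma empty_mem_A (n : ℕ) : (∅ : HFSet) ∈ A n := by
  cases n with
  | zero => simp [A]
  | succ n => exact mem_A_succ_iff.2 (Or.inl rfl)

lemma A_subset_succ (n : ℕ) : A n ⊆ A (n+1) := by
  induction n with
  | zero =>
    intro z hz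
    rcases hz with rfl
    exact empty_mem_A 1
  | succ n ih =>
    intro z hz
    rcases mem_A_succ_iff.1 hz with rfl | ⟨x, hx, y, hy, rfl⟩
    · exact empty_mem_A _
    · exact mem_A_succ_iff.2 (Or.inr ⟨x, ih hx, y, ih hy, rfl⟩)

lemma A_mono {n m : ℕ} (h : n ≤ m) : A n ⊆ A m := by
  induction h with
  | refl => exact subset_rfl
  | step h ih => exact ih.trans (A_subset_succ _)

lemma mem_A_zero {x : HFSet} (h : x ∈ A 0) : x = ∅ := h

lemma mem_of_mem_A_succ {n : ℕ} {x y : HFSet} (hx : x ∈ A (n+1)) (hy : y ∈ x) :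
    y ∈ A n := by
  induction n generalizing x with
  | zero =>
    rcases mem_A_succ_iff.1 hx with rfl | ⟨w, hw, z, hz, rfl⟩
    · exact absurd hy (ZFSet.notMem_empty y)
    · rcases ZFSet.mem_insert_iff.1 hy with rfl | h
      · exact hz
      · rw [mem_A_zero hw] at h; exact absurd h (ZFSet.notMem_empty y)
  | succ n ih =>
    rcases mem_A_succ_iff.1 hx with rfl | ⟨w, hw, z, hz, rfl⟩
    · exact absurd hy (ZFSet.notMem_empty y)
    · rcases ZFSet.mem_insert_iff.1 hy with rfl | h
      · exact hz
      · exact A_subset_succ n (ih hw h)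

lemma A_finite (n : ℕ) : (A n).Finite := by
  induction n with
  | zero => exact Set.finite_singleton _
  | succ n ih =>
    have : A (n+1) ⊆ {∅} ∪ Set.image2 (fun y x => insert y x) (A n) (A n) := by
      intro z hz
      rcases mem_A_succ_iff.1 hz with rfl | ⟨x, hx, y, hy, rfl⟩
      · exact Or.inl rfl
      · exact Or.inr ⟨y, hy, x, hx, rfl⟩
    exact Set.Finite.subset ((Set.finite_singleton _).union (Set.Finite.image2 _ ih ih)) this

lemma toSet_finite_of_mem_A {n : ℕ} {x : HFSet} (h : x ∈ A n) : x.toSet.Finite := by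
  induction n generalizing x with
  | zero => rw [mem_A_zero h]; simp
  | succ n ih =>
    rcases mem_A_succ_iff.1 h with rfl | ⟨w, hw, z, hz, rfl⟩
    · simp
    · rw [ZFSet.toSet_insert]; exact (ih hw).insert z

-- W lemmas
lemma W_subset_succ (n : ℕ) : W n ⊆ W (n+1) := by
  induction n with
  | zero => intro z hz; exact absurd hz (ZFSet.notMem_empty z)
  | succ n ih =>
    intro z hz
    rw [W, ZFSet.mem_powerset] at hz ⊢
    exact fun y hy => ih (hz hy)

lemma W_mono {n m : ℕ} (h : n ≤ m) : W n ⊆ W m := by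
  induction h with
  | refl => exact fun _ h => h
  | step h ih => exact fun z hz => W_subset_succ _ (ih hz)

lemma A_subset_W (n : ℕ) : A n ⊆ (W (n+1)).toSet := by
  induction n with
  | zero =>
    intro z hz
    rw [mem_A_zero hz]
    simp only [ZFSet.mem_toSet, W, ZFSet.mem_powerset]
    intro y hy; exact absurd hy (ZFSet.notMem_empty y)
  | succ n ih =>
    intro z hz
    rw [ZFSet.mem_toSet _ _, show W (n+2) = ZFSet.powerset (W (n+1)) from rfl,
      ZFSet.mem_powerset]
    intro y hy
    exact (ZFSet.mem_toSet _ _).1 (ih (mem_of_mem_A_succ hz hy))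

lemma rk_le_iff {x : HFSet} {N : ℕ} (hx : x ∈ W (N+1)) {t : ℕ} :
    rk x ≤ t ↔ x ∈ W (t+1) := by
  constructor
  · intro h
    have hne : {n | x ∈ W (n + 1)}.Nonempty := ⟨N, hx⟩
    have : x ∈ W (rk x + 1) := Nat.sInf_mem hne
    exact W_mono (by omega) this
  · intro h
    exact Nat.sInf_le h

-- auxiliary definitions
def Alow (m : ℕ) : Set HFSet := Az ((m : ℤ) - 1)

lemma Az_coe (n : ℕ) : Az (n : ℤ) = A n := by simp [Az]

instance : DecidableEq HFSet := Classical.decEq _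

lemma Alow_succ (m : ℕ) : Alow (m+1) = A m := by
  simp [Alow, Az]

lemma Alow_zero : Alow 0 = ∅ := by simp [Alow, Az]

lemma Alow_subset (m : ℕ) : Alow m ⊆ A m := by
  cases m with
  | zero => rw [Alow_zero]; exact Set.empty_subset _
  | succ m => rw [Alow_succ]; exact A_subset_succ m

lemma mem_Alow_of_mem {m : ℕ} {x y : HFSet} (hx : x ∈ A m) (hy : y ∈ x) :
    y ∈ Alow m := by
  cases m with
  | zero => rw [mem_A_zero hx] at hy; exact absurd hy (ZFSet.notMem_empty y)
  | succ m => rw [Alow_succ]; exact mem_of_mem_A_succ hx hy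

lemma le_of_not_mem_Alow {m j : ℕ} {z : HFSet} (hz : z ∈ A j) (h : z ∉ Alow m) :
    m ≤ j := by
  by_contra hlt
  push_neg at hlt
  cases m with
  | zero => omega
  | succ m => exact h (by rw [Alow_succ]; exact A_mono (by omega) hz)

def sHi (m : ℕ) (x : HFSet) : HFSet := ZFSet.sep (fun y => y ∉ Alow m) x
def sLo (m : ℕ) (x : HFSet) : HFSet := ZFSet.sep (fun y => y ∈ Alow m) x

lemma mem_sHi {m : ℕ} {x y : HFSet} : y ∈ sHi m x ↔ y ∈ x ∧ y ∉ Alow m :=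
  ZFSet.mem_sep

lemma mem_sLo {m : ℕ} {x y : HFSet} : y ∈ sLo m x ↔ y ∈ x ∧ y ∈ Alow m :=
  ZFSet.mem_sep

lemma sHi_toSet_subset {m : ℕ} {x : HFSet} : (sHi m x).toSet ⊆ x.toSet := by
  intro y hy
  rw [ZFSet.mem_toSet] at hy ⊢
  exact (mem_sHi.1 hy).1

/-- Building lemma: adjoining the elements of `T` to `x₀` raises the level by
at most `T.card`. -/
lemma L1 (T : Finset HFSet) : ∀ (j : ℕ) (x₀ x : HFSet), x₀ ∈ A j →
    (∀ y ∈ T, y ∈ A j) → (∀ z : HFSet, z ∈ x ↔ z ∈ x₀ ∨ z ∈ T) →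
    x ∈ A (j + T.card) := by
  induction T using Finset.induction_on with
  | empty =>
    intro j x₀ x h0 _ hx
    have : x = x₀ := ZFSet.ext fun z => by simp [hx z]
    simpa [this] using h0
  | @insert a T ha ih =>
    intro j x₀ x h0 hT hx
    set x' : HFSet := ZFSet.sep (fun z => z ∈ x₀ ∨ z ∈ T) x with hx'def
    have hx' : ∀ z : HFSet, z ∈ x' ↔ z ∈ x₀ ∨ z ∈ T := by
      intro z
      rw [hx'def, ZFSet.mem_sep]
      constructor
      · exact fun h => h.2
      · intro h
        exact ⟨(hx z).2 (by rcases h with h | h; exact Or.inl h; exact Or.inr (Finset.mem_insert_of_mem h)), h⟩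
    have hmem : x' ∈ A (j + T.card) :=
      ih j x₀ x' h0 (fun y hy => hT y (Finset.mem_insert_of_mem hy)) hx'
    have hxeq : x = insert a x' := by
      apply ZFSet.ext
      intro z
      rw [ZFSet.mem_insert_iff, hx z, hx' z]
      simp only [Finset.mem_insert]
      tauto
    have haA : a ∈ A (j + T.card) := A_mono (by omega) (hT a (Finset.mem_insert_self a T))
    have : x ∈ A (j + T.card + 1) := by
      rw [hxeq]
      exact mem_A_succ_iff.2 (Or.inr ⟨x', hmem, a, haA, rfl⟩)
    have hcard : (insert a T).card = T.card + 1 := Finset.card_insert_of_notMem ha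
    rw [hcard]
    exact A_mono (by omega) this

/-- Tearing-down lemma. -/
lemma L2 (m : ℕ) : ∀ (j : ℕ) (x : HFSet), x ∈ A j → (∀ y ∈ x, y ∈ A m) →
    ((sHi m x).toSet.ncard = 0 ∨ m + (sHi m x).toSet.ncard ≤ j) ∧
      sLo m x ∈ A (j - (sHi m x).toSet.ncard) := by
  intro j
  induction j with
  | zero =>
    intro x hx _
    rw [mem_A_zero hx]
    have h1 : sHi m ∅ = ∅ := ZFSet.ext fun z => by
      simp [mem_sHi, ZFSet.notMem_empty]
    have h2 : sLo m ∅ = ∅ := ZFSet.ext fun z => by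
      simp [mem_sLo, ZFSet.notMem_empty]
    rw [h1, h2]
    simp [empty_mem_A]
  | succ j ih =>
    intro x hx hall
    rcases mem_A_succ_iff.1 hx with rfl | ⟨w, hw, z, hz, rfl⟩
    · have h1 : sHi m ∅ = ∅ := ZFSet.ext fun z => by
        simp [mem_sHi, ZFSet.notMem_empty]
      have h2 : sLo m ∅ = ∅ := ZFSet.ext fun z => by
        simp [mem_sLo, ZFSet.notMem_empty]
      rw [h1, h2]
      simp [empty_mem_A]
    · have hwall : ∀ y ∈ w, y ∈ A m := fun y hy =>
        hall y (ZFSet.mem_insert_iff.2 (Or.inr hy))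
      obtain ⟨hd, hlo⟩ := ih w hw hwall
      have hwfin : w.toSet.Finite := toSet_finite_of_mem_A hw
      set k' := (sHi m w).toSet.ncard with hk'
      by_cases hzl : z ∈ Alow m
      · -- z is a low element
        have hsHi : sHi m (insert z w) = sHi m w := ZFSet.ext fun y => by
          rw [mem_sHi, mem_sHi, ZFSet.mem_insert_iff]
          constructor
          · rintro ⟨rfl | h, h2⟩
            · exact absurd hzl h2
            · exact ⟨h, h2⟩
          · exact fun ⟨h1, h2⟩ => ⟨Or.inr h1, h2⟩
        have hsLo : sLo m (insert z w) = insert z (sLo m w) := ZFSet.ext fun y => by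
          rw [mem_sLo, ZFSet.mem_insert_iff, ZFSet.mem_insert_iff, mem_sLo]
          constructor
          · rintro ⟨rfl | h, h2⟩
            · exact Or.inl rfl
            · exact Or.inr ⟨h, h2⟩
          · rintro (rfl | ⟨h1, h2⟩)
            · exact ⟨Or.inl rfl, hzl⟩
            · exact ⟨Or.inr h1, h2⟩
        rw [hsHi, hsLo]
        refine ⟨by omega, ?_⟩
        have hz' : z ∈ A (j - k') := by
          rcases hd with h0 | h
          · rw [h0]; simpa using A_mono (by omega) hz
          · exact A_mono (by omega) (Alow_subset m hzl)
        have : insert z (sLo m w) ∈ A (j - k' + 1) :=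
          mem_A_succ_iff.2 (Or.inr ⟨sLo m w, hlo, z, hz', rfl⟩)
        exact A_mono (by omega) this
      · -- z is a high element
        have hzA : z ∈ A m := hall z (ZFSet.mem_insert_iff.2 (Or.inl rfl))
        have hmj : m ≤ j := le_of_not_mem_Alow hz hzl
        by_cases hzw : z ∈ w
        · have hxw : (insert z w : HFSet) = w := ZFSet.ext fun y => by
            rw [ZFSet.mem_insert_iff]
            constructor
            · rintro (rfl | h); exact hzw; exact h
            · exact Or.inr
          rw [hxw]
          exact ⟨by omega, A_mono (by omega) hlo⟩
        · have hsHi : sHi m (insert z w) = insert z (sHi m w) := ZFSet.ext fun y => by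
            rw [mem_sHi, ZFSet.mem_insert_iff, ZFSet.mem_insert_iff, mem_sHi]
            constructor
            · rintro ⟨rfl | h1, h2⟩
              · exact Or.inl rfl
              · exact Or.inr ⟨h1, h2⟩
            · rintro (rfl | ⟨h1, h2⟩)
              · exact ⟨Or.inl rfl, hzl⟩
              · exact ⟨Or.inr h1, h2⟩
          have hsLo : sLo m (insert z w) = sLo m w := ZFSet.ext fun y => by
            rw [mem_sLo, mem_sLo, ZFSet.mem_insert_iff]
            constructor
            · rintro ⟨rfl | h, h2⟩
              · exact absurd h2 hzl
              · exact ⟨h, h2⟩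
            · exact fun ⟨h1, h2⟩ => ⟨Or.inr h1, h2⟩
          have hznot : z ∉ (sHi m w).toSet := by
            rw [ZFSet.mem_toSet, mem_sHi]
            exact fun h => hzw h.1
          have hkcard : (sHi m (insert z w)).toSet.ncard = k' + 1 := by
            rw [hsHi, ZFSet.toSet_insert,
              Set.ncard_insert_of_notMem hznot (hwfin.subset sHi_toSet_subset)]
          rw [hkcard, hsLo]
          exact ⟨Or.inr (by omega), by
            have : j + 1 - (k' + 1) = j - k' := by omega
            rw [this]; exact hlo⟩

-- rank lemmas
lemma mem_W_of_mem_A {n : ℕ} {x : HFSet} (h : x ∈ A n) : x ∈ W (n+1) :=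
  (ZFSet.mem_toSet _ _).1 (A_subset_W n h)

lemma rk_le_iff_forall {n : ℕ} {x : HFSet} (hx : x ∈ A n) (t : ℕ) :
    (rk x : ℤ) ≤ (t : ℤ) ↔ ∀ y ∈ x, y ∈ W t := by
  have h1 : (rk x : ℤ) ≤ (t : ℤ) ↔ rk x ≤ t := by exact_mod_cast Iff.rfl
  rw [h1, rk_le_iff (mem_W_of_mem_A hx)]
  rw [show W (t+1) = ZFSet.powerset (W t) from rfl, ZFSet.mem_powerset]
  exact ⟨fun h y hy => h hy, fun h y hy => h y hy⟩

lemma rk_pred_iff {t : ℕ} {y : HFSet} {N : ℕ} (hy : y ∈ W (N+1)) :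
    (rk y : ℤ) ≤ (t : ℤ) - 1 ↔ y ∈ W t := by
  cases t with
  | zero =>
    constructor
    · intro h; exfalso; omega
    · intro h; exact absurd h (ZFSet.notMem_empty y)
  | succ t =>
    have h1 : (rk y : ℤ) ≤ (t+1 : ℕ) - 1 ↔ rk y ≤ t := by
      push_cast; omega
    rw [h1, rk_le_iff hy]

-- a ZFSet realizing any finset of HF sets
lemma exists_ofFinset (F : Finset HFSet) : ∃ s : HFSet, ∀ z, z ∈ s ↔ z ∈ F := by
  induction F using Finset.induction_on with
  | empty => exact ⟨∅, fun z => by simp [ZFSet.notMem_empty]⟩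
  | @insert a F ha ih =>
    obtain ⟨s, hs⟩ := ih
    exact ⟨insert a s, fun z => by
      rw [ZFSet.mem_insert_iff, Finset.mem_insert, hs]⟩

def ofF (F : Finset HFSet) : HFSet := (exists_ofFinset F).choose

lemma mem_ofF {F : Finset HFSet} {z : HFSet} : z ∈ ofF F ↔ z ∈ F :=
  (exists_ofFinset F).choose_spec z

lemma toSet_ofF (F : Finset HFSet) : (ofF F).toSet = ↑F := by
  ext z; rw [ZFSet.mem_toSet, mem_ofF, Finset.mem_coe]

/-- Counting ZF-sets that are `k`-element subsets of a given finite collection. -/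
lemma card_subsets (Dfin : Finset HFSet) (k : ℕ) :
    {s : HFSet | (∀ y ∈ s, y ∈ Dfin) ∧ s.toSet.ncard = k}.ncard
      = Nat.choose Dfin.card k := by
  have himg : {s : HFSet | (∀ y ∈ s, y ∈ Dfin) ∧ s.toSet.ncard = k}
      = ofF '' ↑(Finset.powersetCard k Dfin) := by
    ext s
    simp only [Set.mem_setOf_eq, Set.mem_image, Finset.mem_coe,
      Finset.mem_powersetCard]
    constructor
    · rintro ⟨hsub, hcard⟩
      have hfin : s.toSet.Finite :=
        Set.Finite.subset Dfin.finite_toSet (fun y hy =>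
          Finset.mem_coe.2 (hsub y ((ZFSet.mem_toSet _ _).1 hy)))
      refine ⟨hfin.toFinset, ⟨?_, ?_⟩, ?_⟩
      · intro y hy
        exact hsub y ((ZFSet.mem_toSet _ _).1 (hfin.mem_toFinset.1 hy))
      · rw [← hcard, Set.ncard_eq_toFinset_card _ hfin]
      · apply ZFSet.ext
        intro z
        rw [mem_ofF, hfin.mem_toFinset, ZFSet.mem_toSet]
    · rintro ⟨F, ⟨hsub, hcard⟩, rfl⟩
      refine ⟨fun y hy => hsub (mem_ofF.1 hy), ?_⟩
      rw [toSet_ofF, Set.ncard_coe_finset, hcard]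
  rw [himg, Set.ncard_image_of_injOn, Set.ncard_coe_finset,
    Finset.card_powersetCard]
  intro F hF G hG h
  apply Finset.ext
  intro z
  rw [← mem_ofF, ← mem_ofF, h]

lemma ncard_prod_fin {α β : Type*} {s : Set α} {t : Set β}
    (hs : s.Finite) (ht : t.Finite) :
    (s ×ˢ t).ncard = s.ncard * t.ncard := by
  classical
  rw [Set.ncard_eq_toFinset_card _ (hs.prod ht), Set.ncard_eq_toFinset_card _ hs,
    Set.ncard_eq_toFinset_card _ ht, ← Finset.card_product]
  congr 1
  ext p
  simp [Set.Finite.mem_toFinset]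

lemma ncard_partition {α : Type*} (f : α → ℕ) :
    ∀ (N : ℕ) (S : Set α), S.Finite → (∀ x ∈ S, f x ≤ N) →
    S.ncard = ∑ k ∈ Finset.range (N+1), {x ∈ S | f x = k}.ncard := by
  intro N
  induction N with
  | zero =>
    intro S hS hf
    have : {x ∈ S | f x = 0} = S := by
      ext x; simp only [Set.mem_setOf_eq]
      exact ⟨fun h => h.1, fun h => ⟨h, Nat.le_zero.1 (hf x h)⟩⟩
    simp [this]
  | succ N ih =>
    intro S hS hf
    have hdecomp : S = {x ∈ S | f x ≤ N} ∪ {x ∈ S | f x = N+1} := by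
      ext x
      simp only [Set.mem_union, Set.mem_setOf_eq]
      constructor
      · intro h
        have := hf x h
        rcases Nat.lt_or_ge (f x) (N+1) with h' | h'
        · exact Or.inl ⟨h, by omega⟩
        · exact Or.inr ⟨h, by omega⟩
      · rintro (h | h) <;> exact h.1
    have hdisj : Disjoint {x ∈ S | f x ≤ N} {x ∈ S | f x = N+1} := by
      rw [Set.disjoint_left]
      rintro x ⟨_, h1⟩ ⟨_, h2⟩
      omega
    have h1 : {x ∈ S | f x ≤ N}.Finite := hS.subset (fun x hx => hx.1)
    have h2 : {x ∈ S | f x = N+1}.Finite := hS.subset (fun x hx => hx.1)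
    rw [Finset.sum_range_succ]
    have hsum : ∑ k ∈ Finset.range (N+1), {x ∈ S | f x = k}.ncard
        = {x ∈ S | f x ≤ N}.ncard := by
      rw [ih _ h1 (fun x hx => hx.2)]
      apply Finset.sum_congr rfl
      intro k hk
      have hk' := Finset.mem_range.1 hk
      congr 1
      ext x
      simp only [Set.mem_setOf_eq]
      constructor
      · rintro ⟨ha, hb⟩; exact ⟨⟨ha, by omega⟩, hb⟩
      · rintro ⟨⟨ha, _⟩, hb⟩; exact ⟨ha, hb⟩
    rw [hsum, ← Set.ncard_union_eq hdisj h1 h2, ← hdecomp]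

-- refactor of card_subsets pieces
lemma subsets_eq_image (Dfin : Finset HFSet) (k : ℕ) :
    {s : HFSet | (∀ y ∈ s, y ∈ Dfin) ∧ s.toSet.ncard = k}
      = ofF '' ↑(Finset.powersetCard k Dfin) := by
  ext s
  simp only [Set.mem_setOf_eq, Set.mem_image, Finset.mem_coe,
    Finset.mem_powersetCard]
  constructor
  · rintro ⟨hsub, hcard⟩
    have hfin : s.toSet.Finite :=
      Set.Finite.subset Dfin.finite_toSet (fun y hy =>
        Finset.mem_coe.2 (hsub y ((ZFSet.mem_toSet _ _).1 hy)))
    refine ⟨hfin.toFinset, ⟨?_, ?_⟩, ?_⟩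
    · intro y hy
      exact hsub y ((ZFSet.mem_toSet _ _).1 (hfin.mem_toFinset.1 hy))
    · rw [← hcard, Set.ncard_eq_toFinset_card _ hfin]
    · apply ZFSet.ext
      intro z
      rw [mem_ofF, hfin.mem_toFinset, ZFSet.mem_toSet]
  · rintro ⟨F, ⟨hsub, hcard⟩, rfl⟩
    refine ⟨fun y hy => hsub (mem_ofF.1 hy), ?_⟩
    rw [toSet_ofF, Set.ncard_coe_finset, hcard]

lemma subsets_finite (Dfin : Finset HFSet) (k : ℕ) :
    {s : HFSet | (∀ y ∈ s, y ∈ Dfin) ∧ s.toSet.ncard = k}.Finite := by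
  rw [subsets_eq_image]
  exact ((Finset.powersetCard k Dfin).finite_toSet).image _

lemma Alow_eq_A {n : ℕ} (hn : 1 ≤ n) : Alow n = A (n - 1) := by
  have h : n = (n - 1) + 1 := by omega
  rw [h, Alow_succ]
  norm_num

-- main counting definitions
def Dset (m t : ℕ) : Set HFSet :=
  {y | y ∈ A m ∧ y ∉ Alow m ∧ (rk y : ℤ) ≤ (t : ℤ) - 1}

lemma Dset_finite (m t : ℕ) : (Dset m t).Finite :=
  (A_finite m).subset (fun y hy => hy.1)

def DfinS (m t : ℕ) : Finset HFSet := (Dset_finite m t).toFinset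

lemma mem_DfinS {m t : ℕ} {y : HFSet} : y ∈ DfinS m t ↔ y ∈ Dset m t :=
  (Dset_finite m t).mem_toFinset

def Sset (n m t : ℕ) : Set HFSet :=
  {x | x ∈ A n ∧ x ∉ Alow n ∧ (∀ y ∈ x, y ∈ A m) ∧ (rk x : ℤ) ≤ (t : ℤ)}

def SkSet (n m t k : ℕ) : Set HFSet :=
  {x ∈ Sset n m t | (sHi m x).toSet.ncard = k}

def Vset (n m t k : ℕ) : Set HFSet :=
  {x₀ | x₀ ∈ A (n-k) ∧ (k ≠ n - m → x₀ ∉ Alow (n-k)) ∧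
    (∀ y ∈ x₀, y ∈ Alow m) ∧ (rk x₀ : ℤ) ≤ (t : ℤ)}

def SigSet (m t k : ℕ) : Set HFSet :=
  {s | (∀ y ∈ s, y ∈ DfinS m t) ∧ s.toSet.ncard = k}

def Phi (m : ℕ) (x : HFSet) : HFSet × HFSet := (sLo m x, sHi m x)

lemma Phi_injective (m : ℕ) : Function.Injective (Phi m) := by
  intro x y h
  have h1 : sLo m x = sLo m y := congrArg Prod.fst h
  have h2 : sHi m x = sHi m y := congrArg Prod.snd h
  have key : ∀ u v : HFSet, sLo m u = sLo m v → sHi m u = sHi m v →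
      ∀ z, z ∈ u → z ∈ v := by
    intro u v hl hh z hz
    by_cases hzl : z ∈ Alow m
    · have : z ∈ sLo m v := hl ▸ mem_sLo.2 ⟨hz, hzl⟩
      exact (mem_sLo.1 this).1
    · have : z ∈ sHi m v := hh ▸ mem_sHi.2 ⟨hz, hzl⟩
      exact (mem_sHi.1 this).1
  exact ZFSet.ext fun z => ⟨key x y h1 h2 z, key y x h1.symm h2.symm z⟩

lemma image_SkSet (n m t k : ℕ) (hmn : m < n) (hk1 : 1 ≤ k) (hk2 : k ≤ n - m) :
    Phi m '' SkSet n m t k = Vset n m t k ×ˢ SigSet m t k := by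
  have hAlown : Alow n = A (n - 1) := Alow_eq_A (by omega)
  ext ⟨x₀, s⟩
  simp only [Set.mem_image, Set.mem_prod]
  constructor
  · -- forward
    rintro ⟨x, ⟨⟨hxn, hxn1, hxm, hxrk⟩, hfx⟩, hphi⟩
    have hlo : sLo m x = x₀ := congrArg Prod.fst hphi
    have hhi : sHi m x = s := congrArg Prod.snd hphi
    obtain ⟨hdisj, hloA⟩ := L2 m n x hxn hxm
    rw [hfx] at hdisj hloA
    have hmk : m + k ≤ n := by omega
    have hxfin : x.toSet.Finite := toSet_finite_of_mem_A hxn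
    have hsfin : (sHi m x).toSet.Finite := hxfin.subset sHi_toSet_subset
    have hWx : ∀ y ∈ x, y ∈ W t := (rk_le_iff_forall hxn t).1 hxrk
    have hx0A : x₀ ∈ A (n - k) := hlo ▸ hloA
    have hx0low : ∀ y ∈ x₀, y ∈ Alow m := by
      intro y hy
      rw [← hlo] at hy
      exact (mem_sLo.1 hy).2
    have hx0rk : (rk x₀ : ℤ) ≤ (t : ℤ) := by
      rw [rk_le_iff_forall hx0A t]
      intro y hy
      rw [← hlo] at hy
      exact hWx y (mem_sLo.1 hy).1
    have hx0not : k ≠ n - m → x₀ ∉ Alow (n - k) := by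
      intro hkne hx0in
      have hklt : k < n - m := by omega
      rw [Alow_eq_A (by omega)] at hx0in
      have hTcard : hsfin.toFinset.card = k := by
        rw [← Set.ncard_eq_toFinset_card _ hsfin, hfx]
      have hrebuild : x ∈ A ((n - k - 1) + hsfin.toFinset.card) := by
        apply L1 hsfin.toFinset (n - k - 1) x₀ x hx0in
        · intro y hy
          rw [hsfin.mem_toFinset, ZFSet.mem_toSet] at hy
          exact A_mono (by omega) (hxm y (mem_sHi.1 hy).1)
        · intro z
          rw [hsfin.mem_toFinset, ZFSet.mem_toSet, ← hlo, mem_sLo, mem_sHi]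
          constructor
          · intro hz
            by_cases hzl : z ∈ Alow m
            · exact Or.inl ⟨hz, hzl⟩
            · exact Or.inr ⟨hz, hzl⟩
          · rintro (⟨hz, _⟩ | ⟨hz, _⟩) <;> exact hz
      rw [hTcard] at hrebuild
      exact hxn1 (hAlown ▸ A_mono (by omega) hrebuild)
    refine ⟨⟨hx0A, hx0not, hx0low, hx0rk⟩, ?_, ?_⟩
    · -- s ∈ SigSet, membership part
      intro y hy
      rw [← hhi] at hy
      obtain ⟨hyx, hynl⟩ := mem_sHi.1 hy
      have hyA : y ∈ A m := hxm y hyx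
      rw [mem_DfinS]
      exact ⟨hyA, hynl, (rk_pred_iff (mem_W_of_mem_A hyA)).2 (hWx y hyx)⟩
    · rw [← hhi]
      exact hfx
  · -- backward
    rintro ⟨⟨hx0A, hx0not, hx0low, hx0rk⟩, hssub, hscard⟩
    have hsD : ∀ y ∈ s, y ∈ Dset m t := fun y hy => mem_DfinS.1 (hssub y hy)
    set x : HFSet := x₀ ∪ s with hxdef
    have hmemx : ∀ z : HFSet, z ∈ x ↔ z ∈ x₀ ∨ z ∈ s := fun z => ZFSet.mem_union
    have hLo : sLo m x = x₀ := ZFSet.ext fun z => by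
      rw [mem_sLo, hmemx]
      constructor
      · rintro ⟨hz | hz, hzl⟩
        · exact hz
        · exact absurd hzl (hsD z hz).2.1
      · intro hz
        exact ⟨Or.inl hz, hx0low z hz⟩
    have hHi : sHi m x = s := ZFSet.ext fun z => by
      rw [mem_sHi, hmemx]
      constructor
      · rintro ⟨hz | hz, hzl⟩
        · exact absurd (hx0low z hz) hzl
        · exact hz
      · intro hz
        exact ⟨Or.inr hz, (hsD z hz).2.1⟩
    have hsfin : s.toSet.Finite :=
      Set.Finite.subset (A_finite m) (fun y hy =>
        (hsD y ((ZFSet.mem_toSet _ _).1 hy)).1)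
    have hTcard : hsfin.toFinset.card = k := by
      rw [← Set.ncard_eq_toFinset_card _ hsfin, hscard]
    have hxA : x ∈ A n := by
      have : x ∈ A ((n - k) + hsfin.toFinset.card) := by
        apply L1 hsfin.toFinset (n - k) x₀ x hx0A
        · intro y hy
          rw [hsfin.mem_toFinset, ZFSet.mem_toSet] at hy
          exact A_mono (by omega) (hsD y hy).1
        · intro z
          rw [hsfin.mem_toFinset, ZFSet.mem_toSet, hmemx]
      rw [hTcard] at this
      have heq : n - k + k = n := by omega
      rwa [heq] at this
    have hxm : ∀ y ∈ x, y ∈ A m := by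
      intro y hy
      rcases (hmemx y).1 hy with hy' | hy'
      · exact Alow_subset m (hx0low y hy')
      · exact (hsD y hy').1
    have hxn1 : x ∉ Alow n := by
      rw [hAlown]
      intro hxin
      obtain ⟨hdisj, hloA⟩ := L2 m (n-1) x hxin hxm
      have hfx : (sHi m x).toSet.ncard = k := by rw [hHi, hscard]
      rw [hfx] at hdisj hloA
      rcases hdisj with h0 | hle
      · omega
      · have hkne : k ≠ n - m := by omega
        apply hx0not hkne
        rw [Alow_eq_A (by omega)]
        have heq : n - 1 - k = n - k - 1 := by omega
        rw [← heq, ← hLo]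
        exact hloA
    have hxrk : (rk x : ℤ) ≤ (t : ℤ) := by
      rw [rk_le_iff_forall hxA t]
      intro y hy
      rcases (hmemx y).1 hy with hy' | hy'
      · exact (rk_le_iff_forall hx0A t).1 hx0rk y hy'
      · exact (rk_pred_iff (mem_W_of_mem_A (hsD y hy').1)).1 (hsD y hy').2.2
    refine ⟨x, ⟨⟨hxA, hxn1, hxm, hxrk⟩, ?_⟩, ?_⟩
    · rw [hHi, hscard]
    · rw [Phi, hLo, hHi]

lemma r_low_eq (t : ℤ) (i m : ℕ) :
    r t i ((m : ℤ) - 1) = {x : HFSet | x ∈ A i ∧ x ∉ Alow i ∧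
      (∀ y, y ∈ x → y ∈ Alow m) ∧ (rk x : ℤ) ≤ t}.ncard := by
  unfold r Alow
  rw [Az_coe]

lemma r_full_eq (n m t : ℕ) : r t n m = (Sset n m t).ncard := by
  unfold r Sset Alow
  rw [Az_coe n, Az_coe m]

lemma Dcard (m t : ℕ) : (DfinS m t).card = r ((t : ℤ) - 1) m ((m : ℤ) - 1) := by
  rw [r_low_eq]
  have hset : {x : HFSet | x ∈ A m ∧ x ∉ Alow m ∧
      (∀ y, y ∈ x → y ∈ Alow m) ∧ (rk x : ℤ) ≤ (t : ℤ) - 1} = Dset m t := by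
    ext x
    simp only [Set.mem_setOf_eq, Dset]
    constructor
    · rintro ⟨h1, h2, _, h4⟩; exact ⟨h1, h2, h4⟩
    · rintro ⟨h1, h2, h4⟩
      exact ⟨h1, h2, fun y hy => mem_Alow_of_mem h1 hy, h4⟩
  rw [hset, Set.ncard_eq_toFinset_card _ (Dset_finite m t)]
  rfl

lemma SigSet_ncard (m t k : ℕ) :
    (SigSet m t k).ncard = Nat.choose (r ((t : ℤ) - 1) m ((m : ℤ) - 1)) k := by
  rw [← Dcard m t]
  exact card_subsets (DfinS m t) k

lemma Sk0_ncard (n m t : ℕ) (hmn : m < n) :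
    (SkSet n m t 0).ncard = r t n ((m : ℤ) - 1) := by
  rw [r_low_eq]
  congr 1
  ext x
  simp only [SkSet, Sset, Set.mem_setOf_eq]
  constructor
  · rintro ⟨⟨h1, h2, h3, h4⟩, h5⟩
    refine ⟨h1, h2, ?_, h4⟩
    intro y hy
    by_contra hyl
    have hfin : (sHi m x).toSet.Finite :=
      (toSet_finite_of_mem_A h1).subset sHi_toSet_subset
    have : (sHi m x).toSet = ∅ := (Set.ncard_eq_zero hfin).1 h5
    have hmem : y ∈ (sHi m x).toSet := (ZFSet.mem_toSet _ _).2 (mem_sHi.2 ⟨hy, hyl⟩)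
    rw [this] at hmem
    exact hmem
  · rintro ⟨h1, h2, h3, h4⟩
    have hempty : sHi m x = ∅ := ZFSet.ext fun z => by
      rw [mem_sHi]
      constructor
      · rintro ⟨hz, hzl⟩; exact absurd (h3 z hz) hzl
      · intro hz; exact absurd hz (ZFSet.notMem_empty z)
    refine ⟨⟨h1, h2, fun y hy => Alow_subset m (h3 y hy), h4⟩, ?_⟩
    rw [hempty]
    simp [ZFSet.toSet_empty]

lemma Vset_ncard_mid (n m t k : ℕ) (hmn : m < n) (hk1 : 1 ≤ k) (hk2 : k < n - m) :
    (Vset n m t k).ncard = r t ((n - k : ℕ)) ((m : ℤ) - 1) := by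
  rw [r_low_eq]
  congr 1
  ext x
  simp only [Vset, Set.mem_setOf_eq]
  constructor
  · rintro ⟨h1, h2, h3, h4⟩
    exact ⟨h1, h2 (by omega), h3, h4⟩
  · rintro ⟨h1, h2, h3, h4⟩
    exact ⟨h1, fun _ => h2, h3, h4⟩

lemma Vset_ncard_top (n m t : ℕ) (hmn : m < n) :
    (Vset n m t (n - m)).ncard
      = ∑ j ∈ Finset.range (m + 1), r t j ((j : ℤ) - 1) := by
  have hnm : n - (n - m) = m := by omega
  have hfin : (Vset n m t (n - m)).Finite := by
    apply (A_finite (n - (n-m))).subset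
    intro x hx
    exact hx.1
  rw [ncard_partition (fun x => sInf {j | x ∈ A j}) m _ hfin ?_]
  · apply Finset.sum_congr rfl
    intro j hj
    have hjm : j ≤ m := by
      have := Finset.mem_range.1 hj
      omega
    rw [r_low_eq]
    congr 1
    ext x
    simp only [Vset, Set.mem_setOf_eq, hnm]
    constructor
    · rintro ⟨⟨h1, _, h3, h4⟩, h5⟩
      have hne : {i | x ∈ A i}.Nonempty := ⟨m, h1⟩
      have hxj : x ∈ A j := by
        have := Nat.sInf_mem hne
        rwa [h5] at this
      refine ⟨hxj, ?_, fun y hy => mem_Alow_of_mem hxj hy, h4⟩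
      intro hxlow
      cases j with
      | zero => rw [Alow_zero] at hxlow; exact hxlow
      | succ j' =>
        rw [Alow_succ] at hxlow
        have : sInf {i | x ∈ A i} ≤ j' := Nat.sInf_le hxlow
        omega
    · rintro ⟨h1, h2, h3, h4⟩
      have hxm : x ∈ A m := A_mono hjm h1
      refine ⟨⟨hxm, fun h => absurd rfl h, fun y hy => mem_Alow_of_mem hxm hy, h4⟩, ?_⟩
      have hne : {i | x ∈ A i}.Nonempty := ⟨j, h1⟩
      have hle : sInf {i | x ∈ A i} ≤ j := Nat.sInf_le h1
      have hge : j ≤ sInf {i | x ∈ A i} := by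
        by_contra hlt
        push_neg at hlt
        have hmem := Nat.sInf_mem hne
        have hj1 : 1 ≤ j := by omega
        have : x ∈ A (j - 1) :=
          A_mono (by omega) hmem
        rw [← Alow_eq_A hj1] at this
        exact h2 this
      omega
  · intro x hx
    have h1 : x ∈ A (n - (n - m)) := hx.1
    rw [hnm] at h1
    exact Nat.sInf_le h1

lemma sum_split (N : ℕ) (hN : 1 ≤ N) (g : ℕ → ℕ) :
    ∑ k ∈ Finset.range (N+1), g k
      = g 0 + (∑ k ∈ Finset.Icc 1 (N-1), g k) + g N := by
  rw [Finset.sum_range_succ]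
  congr 1
  have h : Finset.range N = insert 0 (Finset.Icc 1 (N-1)) := by
    ext j
    simp only [Finset.mem_range, Finset.mem_insert, Finset.mem_Icc]
    omega
  rw [h, Finset.sum_insert (by simp [Finset.mem_Icc])]

lemma SkSet_ncard_pos (n m t k : ℕ) (hmn : m < n) (hk1 : 1 ≤ k) (hk2 : k ≤ n - m) :
    (SkSet n m t k).ncard = (Vset n m t k).ncard * (SigSet m t k).ncard := by
  rw [← Set.ncard_image_of_injective (SkSet n m t k) (Phi_injective m),
    image_SkSet n m t k hmn hk1 hk2]
  have hVfin : (Vset n m t k).Finite := (A_finite (n-k)).subset (fun x hx => hx.1)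
  exact ncard_prod_fin hVfin (subsets_finite (DfinS m t) k)

theorem stmt14 (n m t : ℕ) (hmn : m < n) (ht : t ≤ m + 1) :
    r t n m = r t n ((m : ℤ) - 1)
      + (∑ k ∈ Finset.Icc 1 (n - m - 1),
          r t ((n : ℤ) - k) ((m : ℤ) - 1) * Nat.choose (r ((t : ℤ) - 1) m ((m : ℤ) - 1)) k)
      + Nat.choose (r ((t : ℤ) - 1) m ((m : ℤ) - 1)) (n - m)
        * ∑ k ∈ Finset.range (m + 1), r t k ((k : ℤ) - 1) := by
  rw [r_full_eq]
  have hSfin : (Sset n m t).Finite := (A_finite n).subset (fun x hx => hx.1)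
  have hbound : ∀ x ∈ Sset n m t, (sHi m x).toSet.ncard ≤ n - m := by
    intro x hx
    obtain ⟨hd, _⟩ := L2 m n x hx.1 hx.2.2.1
    omega
  rw [ncard_partition (fun x => (sHi m x).toSet.ncard) (n-m) _ hSfin hbound]
  have hNm : 1 ≤ n - m := by omega
  rw [sum_split (n-m) hNm]
  have hterm0 : {x ∈ Sset n m t | (sHi m x).toSet.ncard = 0}.ncard
      = r t n ((m : ℤ) - 1) := Sk0_ncard n m t hmn
  have htermmid : ∀ k ∈ Finset.Icc 1 (n - m - 1),
      {x ∈ Sset n m t | (sHi m x).toSet.ncard = k}.ncard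
        = r t ((n : ℤ) - k) ((m : ℤ) - 1)
            * Nat.choose (r ((t : ℤ) - 1) m ((m : ℤ) - 1)) k := by
    intro k hk
    obtain ⟨hk1, hk2⟩ := Finset.mem_Icc.1 hk
    have h1 := SkSet_ncard_pos n m t k hmn hk1 (by omega)
    have h2 := Vset_ncard_mid n m t k hmn hk1 (by omega)
    have hcast : ((n : ℤ) - k) = ((n - k : ℕ) : ℤ) := by omega
    rw [show {x ∈ Sset n m t | (sHi m x).toSet.ncard = k} = SkSet n m t k from rfl,
      h1, h2, SigSet_ncard, hcast]
  have htermtop : {x ∈ Sset n m t | (sHi m x).toSet.ncard = n - m}.ncard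
      = Nat.choose (r ((t : ℤ) - 1) m ((m : ℤ) - 1)) (n - m)
          * ∑ j ∈ Finset.range (m + 1), r t j ((j : ℤ) - 1) := by
    have h1 := SkSet_ncard_pos n m t (n-m) hmn hNm (le_refl _)
    rw [show {x ∈ Sset n m t | (sHi m x).toSet.ncard = n - m}
        = SkSet n m t (n-m) from rfl, h1, Vset_ncard_top n m t hmn, SigSet_ncard,
      Nat.mul_comm]
  rw [hterm0, htermtop, Finset.sum_congr rfl htermmid]
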